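/- Let ν(y) = (1/2) e^{−|y|} with kernel symbol L̂(k) = k²/(1+k²). Define ū(x) = x² − (x²−3)(x−1)(x+1)/12 − 5/6 for x ∈ (−1,1) and ū(x) = x^{−4} − 1/(6x²) for |x| ≥ 1, and f̄(x) = x² − 2/3 for x ∈ (−1,1), f̄(x) = x^{−4} for |x| ≥ 1. Then ∫_ℝ (ū(x) − ū(x−y)) ν(y) dy = f̄(x) for all x ∈ ℝ. -/

import Mathlib

/-!
Substituting `t = x - y` and splitting at `t = x` gives
`∫ ū(x-y) e^{-|y|} dy = e^{-x} ∫_{-∞}^x ū(t) e^t dt + e^x ∫_x^∞ ū(t) e^{-t} dt`,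
and since `ū` is even the second integral is the first one taken at `-x`. A primitive of
`ū(t) e^t` is `w(t) e^t`, where `w' + w = ū` with `w(t) = -t⁴/12 + t³/3 + t²/3 - 2t/3 - 5/12` on
`(-1, 1)` and `w(t) = -1/(6t²) - 1/(3t³)` outside; the two pieces agree at `±1` and `w(t) e^t → 0`
at `-∞`. Hence the integral equals `ū(x) - (w(x) + w(-x))/2`, which is `f̄(x)` by direct algebra.
-/

open MeasureTheory Set Filter Real Topology

theorem integral_exp_neg_abs : ∫ y : ℝ, exp (-|y|) = 2 := by
  rw [integral_comp_abs (f := fun y => exp (-y)), integral_exp_neg_Ioi_zero, mul_one]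

theorem integrable_exp_neg_abs : Integrable fun y : ℝ => exp (-|y|) :=
  Integrable.of_integral_ne_zero (by rw [integral_exp_neg_abs]; norm_num)

section BoundedMeasurable

variable {g : ℝ → ℝ} {C : ℝ}

theorem integrableOn_mul_exp_Iic (hg : Measurable g) (hC : ∀ t, |g t| ≤ C) (x : ℝ) :
    IntegrableOn (fun t => g t * exp t) (Iic x) :=
  (integrableOn_exp_Iic x).bdd_mul hg.aestronglyMeasurable (ae_of_all _ hC)

theorem integral_comp_sub_mul_exp_neg_abs (hg : Measurable g) (hC : ∀ t, |g t| ≤ C) (x : ℝ) :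
    ∫ y, g (x - y) * exp (-|y|) =
      exp (-x) * (∫ t in Iic x, g t * exp t) + exp x * ∫ t in Ioi x, g t * exp (-t) := by
  have hint : Integrable fun t => g t * exp (-|x - t|) :=
    ((integrable_exp_neg_abs.comp_sub_left x).bdd_mul hg.aestronglyMeasurable (ae_of_all _ hC))
  have hleft : ∫ t in Iic x, g t * exp (-|x - t|) = ∫ t in Iic x, exp (-x) * (g t * exp t) := by
    refine setIntegral_congr_fun measurableSet_Iic fun t ht => ?_
    rw [abs_of_nonneg (sub_nonneg.mpr ht), neg_sub, sub_eq_add_neg, exp_add]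
    ring
  have hright : ∫ t in Ioi x, g t * exp (-|x - t|) = ∫ t in Ioi x, exp x * (g t * exp (-t)) := by
    refine setIntegral_congr_fun measurableSet_Ioi fun t ht => ?_
    rw [abs_of_neg (sub_neg.mpr ht), neg_neg, sub_eq_add_neg, exp_add]
    ring
  rw [← integral_sub_left_eq_self _ volume x]
  simp only [sub_sub_cancel]
  rw [← intervalIntegral.integral_Iic_add_Ioi hint.integrableOn hint.integrableOn, hleft, hright,
    integral_const_mul, integral_const_mul]

end BoundedMeasurable

theorem integral_Ioi_mul_exp_neg_of_even {g : ℝ → ℝ} (hg : Function.Even g) (x : ℝ) :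
    ∫ t in Ioi x, g t * exp (-t) = ∫ t in Iic (-x), g t * exp t := by
  rw [← integral_comp_neg_Ioi x fun t => g t * exp t]
  simp only [hg _]

theorem integral_Iic_eq_of_hasDerivAt_off_countable {F f : ℝ → ℝ} {s : Set ℝ} {x : ℝ}
    (hs : s.Countable) (hF : Continuous F) (hderiv : ∀ t ∉ s, HasDerivAt F (f t) t)
    (hf : IntegrableOn f (Iic x)) (hbot : Tendsto F atBot (𝓝 0)) :
    ∫ t in Iic x, f t = F x := by
  have hFTC : ∀ a ≤ x, ∫ t in a..x, f t = F x - F a := fun a ha =>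
    integral_eq_of_hasDerivAt_off_countable_of_le F f ha hs hF.continuousOn
      (fun t ht => hderiv t ht.2)
      ((intervalIntegrable_iff_integrableOn_Ioc_of_le ha).mpr (hf.mono_set Ioc_subset_Iic_self))
  have hlim : Tendsto (fun a => ∫ t in a..x, f t) atBot (𝓝 (F x - 0)) :=
    (tendsto_const_nhds.sub hbot).congr' <|
      (eventually_le_atBot x).mono fun a ha => (hFTC a ha).symm
  rw [sub_zero] at hlim
  exact tendsto_nhds_unique (intervalIntegral_tendsto_integral_Iic x hf tendsto_id) hlim

theorem integral_sub_comp_sub_mul_laplace {g p : ℝ → ℝ} {C : ℝ} {s : Set ℝ}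
    (hg : Measurable g) (hC : ∀ t, |g t| ≤ C) (hg_even : Function.Even g) (hs : s.Countable)
    (hp : Continuous p) (hderiv : ∀ t ∉ s, HasDerivAt (fun t => p t * exp t) (g t * exp t) t)
    (hbot : Tendsto (fun t => p t * exp t) atBot (𝓝 0)) (x : ℝ) :
    ∫ y, (g x - g (x - y)) * (1 / 2 * exp (-|y|)) = g x - (p x + p (-x)) / 2 := by
  have hprim : ∀ a, ∫ t in Iic a, g t * exp t = p a * exp a := fun a =>
    integral_Iic_eq_of_hasDerivAt_off_countable hs (by fun_prop) hderiv
      (integrableOn_mul_exp_Iic hg hC a) hbot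
  have hint : Integrable fun y => g (x - y) * exp (-|y|) :=
    integrable_exp_neg_abs.bdd_mul (hg.comp (measurable_const_sub x)).aestronglyMeasurable
      (ae_of_all _ fun y => hC _)
  calc ∫ y, (g x - g (x - y)) * (1 / 2 * exp (-|y|))
      = ∫ y, (g x / 2 * exp (-|y|) - 1 / 2 * (g (x - y) * exp (-|y|))) := by
        congr 1; ext y; ring
    _ = g x / 2 * (∫ y, exp (-|y|)) - 1 / 2 * ∫ y, g (x - y) * exp (-|y|) := by
        rw [integral_sub (integrable_exp_neg_abs.const_mul _) (hint.const_mul _),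
          integral_const_mul, integral_const_mul]
    _ = g x - (p x + p (-x)) / 2 := by
        rw [integral_exp_neg_abs, integral_comp_sub_mul_exp_neg_abs hg hC,
          integral_Ioi_mul_exp_neg_of_even hg_even, hprim, hprim, exp_neg]
        field_simp

noncomputable def uBarIn (t : ℝ) : ℝ := t ^ 2 - (t ^ 2 - 3) * (t - 1) * (t + 1) / 12 - 5 / 6

noncomputable def uBarOut (t : ℝ) : ℝ := 1 / t ^ 4 - 1 / (6 * t ^ 2)

noncomputable def uBar (t : ℝ) : ℝ := if |t| < 1 then uBarIn t else uBarOut t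

noncomputable def expPrimIn (t : ℝ) : ℝ := -t ^ 4 / 12 + t ^ 3 / 3 + t ^ 2 / 3 - 2 * t / 3 - 5 / 12

noncomputable def expPrimOut (t : ℝ) : ℝ := -1 / (6 * t ^ 2) - 1 / (3 * t ^ 3)

noncomputable def expPrim (t : ℝ) : ℝ := if |t| < 1 then expPrimIn t else expPrimOut t

theorem measurable_uBar : Measurable uBar :=
  Measurable.ite (measurableSet_lt (by fun_prop) measurable_const)
    (by unfold uBarIn; fun_prop) (by unfold uBarOut; fun_prop)

theorem abs_uBar_le (t : ℝ) : |uBar t| ≤ 2 := by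
  rw [abs_le]
  unfold uBar uBarIn uBarOut
  split_ifs with ht
  · have h2 : t ^ 2 < 1 := by rwa [← sq_abs, sq_lt_one_iff₀ (abs_nonneg t)]
    constructor <;> nlinarith [sq_nonneg t]
  · have h2 : 1 ≤ t ^ 2 := by rw [← sq_abs, one_le_sq_iff₀ (abs_nonneg t)]; exact not_lt.mp ht
    have hs : 0 < 1 / t ^ 2 := by positivity
    have hs1 : 1 / t ^ 2 ≤ 1 := by rwa [div_le_one (by positivity)]
    have h4 : 1 / t ^ 4 = (1 / t ^ 2) ^ 2 := by ring
    have h6 : 1 / (6 * t ^ 2) = 1 / t ^ 2 / 6 := by ring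
    rw [h4, h6]
    constructor <;> nlinarith

theorem uBar_even : Function.Even uBar := fun t => by
  unfold uBar uBarIn uBarOut
  rw [abs_neg]
  split_ifs <;> ring

theorem hasDerivAt_expPrimIn_mul_exp (t : ℝ) :
    HasDerivAt (fun t => expPrimIn t * exp t) (uBarIn t * exp t) t := by
  have hP : HasDerivAt expPrimIn (-t ^ 3 / 3 + t ^ 2 + 2 * t / 3 - 2 / 3) t := by
    have h := (((((hasDerivAt_pow 4 t).neg.div_const 12).add
      ((hasDerivAt_pow 3 t).div_const 3)).add ((hasDerivAt_pow 2 t).div_const 3)).sub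
      ((hasDerivAt_id' t).const_mul 2 |>.div_const 3)).sub_const (5 / 12)
    exact h.congr_deriv (by norm_num; ring)
  exact (hP.mul (hasDerivAt_exp t)).congr_deriv (by unfold uBarIn expPrimIn; ring)

theorem hasDerivAt_expPrimOut_mul_exp {t : ℝ} (ht : t ≠ 0) :
    HasDerivAt (fun t => expPrimOut t * exp t) (uBarOut t * exp t) t := by
  have hQ : HasDerivAt expPrimOut (1 / (3 * t ^ 3) + 1 / t ^ 4) t := by
    have h := ((hasDerivAt_const t (-1 : ℝ)).div ((hasDerivAt_pow 2 t).const_mul 6)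
      (by positivity)).sub ((hasDerivAt_const t (1 : ℝ)).div ((hasDerivAt_pow 3 t).const_mul 3)
      (by positivity))
    exact h.congr_deriv (by field_simp; ring)
  exact (hQ.mul (hasDerivAt_exp t)).congr_deriv (by unfold uBarOut expPrimOut; field_simp; ring)

theorem continuous_expPrim : Continuous expPrim := by
  refine continuous_if (fun a ha => ?_) (by unfold expPrimIn; fun_prop) ?_
  · have h1 : |a| = 1 := frontier_lt_subset_eq continuous_abs continuous_const ha
    rcases (abs_eq zero_le_one).mp h1 with rfl | rfl <;> norm_num [expPrimIn, expPrimOut]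
  · have hsub : closure {t : ℝ | ¬|t| < 1} ⊆ {t | t ≠ 0} :=
      fun t ht h0 => by
        have h1 : t ∈ {t : ℝ | 1 ≤ |t|} :=
          closure_minimal (fun _ h => not_lt.mp h) (isClosed_le continuous_const continuous_abs) ht
        norm_num [h0] at h1
    refine ContinuousOn.mono ?_ hsub
    unfold expPrimOut
    fun_prop (disch := simp_all)

theorem hasDerivAt_expPrim_mul_exp {t : ℝ} (ht : t ∉ ({-1, 1} : Set ℝ)) :
    HasDerivAt (fun t => expPrim t * exp t) (uBar t * exp t) t := by
  rcases lt_trichotomy |t| 1 with hin | hone | hout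
  · have hnear : (fun s => expPrim s * exp s) =ᶠ[𝓝 t] fun s => expPrimIn s * exp s :=
      eventually_of_mem ((isOpen_lt continuous_abs continuous_const).mem_nhds
        (show t ∈ {s : ℝ | |s| < 1} from hin)) fun s hs => by
        simp only [expPrim, if_pos (show |s| < 1 from hs)]
    rw [uBar, if_pos hin]
    exact (hasDerivAt_expPrimIn_mul_exp t).congr_of_eventuallyEq hnear
  · rcases (abs_eq zero_le_one).mp hone with rfl | rfl <;> simp at ht
  · have hnear : (fun s => expPrim s * exp s) =ᶠ[𝓝 t] fun s => expPrimOut s * exp s :=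
      eventually_of_mem ((isOpen_lt continuous_const continuous_abs).mem_nhds
        (show t ∈ {s : ℝ | 1 < |s|} from hout)) fun s hs => by
        simp only [expPrim, if_neg (not_lt.mpr (le_of_lt (show 1 < |s| from hs)))]
    rw [uBar, if_neg (not_lt.mpr hout.le)]
    have ht0 : t ≠ 0 := by rintro rfl; norm_num at hout
    exact (hasDerivAt_expPrimOut_mul_exp ht0).congr_of_eventuallyEq hnear

theorem tendsto_expPrim_mul_exp_atBot : Tendsto (fun t => expPrim t * exp t) atBot (𝓝 0) := by
  have hout : ∀ᶠ t in atBot, -(t⁻¹) ^ 2 / 6 - (t⁻¹) ^ 3 / 3 = expPrim t := by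
    filter_upwards [eventually_lt_atBot (-1)] with t ht
    rw [expPrim, if_neg (by rw [not_lt, abs_of_neg (by linarith)]; linarith), expPrimOut]
    ring
  have hlim : Tendsto (fun t : ℝ => -(t⁻¹) ^ 2 / 6 - (t⁻¹) ^ 3 / 3) atBot (𝓝 0) := by
    have hinv := tendsto_inv_atBot_zero (𝕜 := ℝ)
    simpa using ((hinv.pow 2).neg.div_const 6).sub ((hinv.pow 3).div_const 3)
  simpa using (hlim.congr' hout).mul tendsto_exp_atBot

theorem uBar_sub_half_expPrim_add (x : ℝ) :
    uBar x - (expPrim x + expPrim (-x)) / 2 = if |x| < 1 then x ^ 2 - 2 / 3 else 1 / x ^ 4 := by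
  simp only [uBar, expPrim, abs_neg]
  split_ifs
  · unfold uBarIn expPrimIn; ring
  · unfold uBarOut expPrimOut; ring

/-- Exact solution of the nonlocal Neumann model problem: the piecewise functions
`ū` and `f̄` satisfy `∫_ℝ (ū(x) - ū(x-y)) (1/2) e^{-|y|} dy = f̄(x)` for all `x`. -/
theorem stmt_18 (ubar fbar : ℝ → ℝ)
    (hubar : ∀ x, ubar x =
      if |x| < 1 then x ^ 2 - (x ^ 2 - 3) * (x - 1) * (x + 1) / 12 - 5 / 6
      else 1 / x ^ 4 - 1 / (6 * x ^ 2))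
    (hfbar : ∀ x, fbar x =
      if |x| < 1 then x ^ 2 - 2 / 3 else 1 / x ^ 4) :
    ∀ x : ℝ, (∫ y : ℝ, (ubar x - ubar (x - y)) * (1 / 2 * Real.exp (-|y|))) = fbar x := by
  have hu : ubar = uBar := funext hubar
  intro x
  rw [hu, hfbar, ← uBar_sub_half_expPrim_add]
  exact integral_sub_comp_sub_mul_laplace measurable_uBar abs_uBar_le uBar_even
    ((countable_singleton 1).insert (-1)) continuous_expPrim (fun _ => hasDerivAt_expPrim_mul_exp)
    tendsto_expPrim_mul_exp_atBot x
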